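/- arXiv:1709.03353 — 2 statements merged into one kernel-verified Lean document; each statement's English description precedes it below -/
import Mathlib

section
/- Let Ω be a Hermitian operator on ℂ⁴ with Ω|Φ⁺⟩ = |Φ⁺⟩ and tr(Ω) ≥ 2, where |Φ⁺⟩ = (|00⟩ + |11⟩)/√2. Then there exists a unit vector φ orthogonal to |Φ⁺⟩ with ⟨φ, Ωφ⟩ ≥ 1/3. That is, any strategy fixing the Bell state whose trace is at least 2 accepts some orthogonal state with probability at least 1/3, so the Bell strategy achieving q = 1/3 is optimal among such strategies. -/
open Matrix

/-- The Bell state `|Φ⁺⟩ = (|00⟩ + |11⟩)/√2` in `ℂ²⊗ℂ²`. -/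
noncomputable def bell : Fin 2 × Fin 2 → ℂ :=
  fun p => if p.1 = p.2 then ((1 / Real.sqrt 2 : ℝ) : ℂ) else 0

noncomputable def sC : ℂ := ((1 / Real.sqrt 2 : ℝ) : ℂ)

lemma s2 : ((Real.sqrt 2 : ℝ) : ℂ)⁻¹ * ((Real.sqrt 2 : ℝ) : ℂ)⁻¹ = 1/2 := by
  rw [← mul_inv, ← Complex.ofReal_mul, Real.mul_self_sqrt (by norm_num)]
  norm_num

noncomputable def phi1 : Fin 2 × Fin 2 → ℂ :=
  fun p => if p = (0,0) then sC else if p = (1,1) then -sC else 0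

noncomputable def phi2 : Fin 2 × Fin 2 → ℂ := fun p => if p = (0,1) then 1 else 0
noncomputable def phi3 : Fin 2 × Fin 2 → ℂ := fun p => if p = (1,0) then 1 else 0

lemma key (Ω : Matrix (Fin 2 × Fin 2) (Fin 2 × Fin 2) ℂ) :
    star bell ⬝ᵥ (Ω *ᵥ bell) + star phi1 ⬝ᵥ (Ω *ᵥ phi1) +
    star phi2 ⬝ᵥ (Ω *ᵥ phi2) + star phi3 ⬝ᵥ (Ω *ᵥ phi3) = Ω.trace := by
  simp [dotProduct, mulVec, bell, phi1, phi2, phi3, trace, diag,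
    Fintype.sum_prod_type, Fin.sum_univ_two, Prod.ext_iff, sC, Complex.conj_ofReal, map_inv₀]
  linear_combination (2*(Ω (0,0) (0,0) + Ω (1,1) (1,1))) * s2

lemma bell_norm : star bell ⬝ᵥ bell = 1 := by
  simp [dotProduct, bell, Fintype.sum_prod_type, Fin.sum_univ_two, sC, Complex.conj_ofReal, map_inv₀]
  linear_combination 2 * s2

lemma phi1_norm : star phi1 ⬝ᵥ phi1 = 1 := by
  simp [dotProduct, phi1, Fintype.sum_prod_type, Fin.sum_univ_two, Prod.ext_iff, sC, Complex.conj_ofReal, map_inv₀]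
  linear_combination 2 * s2

lemma phi2_norm : star phi2 ⬝ᵥ phi2 = 1 := by
  simp [dotProduct, phi2, Fintype.sum_prod_type, Fin.sum_univ_two, Prod.ext_iff]

lemma phi3_norm : star phi3 ⬝ᵥ phi3 = 1 := by
  simp [dotProduct, phi3, Fintype.sum_prod_type, Fin.sum_univ_two, Prod.ext_iff]

lemma bell_phi1 : star bell ⬝ᵥ phi1 = 0 := by
  simp [dotProduct, bell, phi1, Fintype.sum_prod_type, Fin.sum_univ_two, Prod.ext_iff, sC, Complex.conj_ofReal, map_inv₀]

lemma bell_phi2 : star bell ⬝ᵥ phi2 = 0 := by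
  simp [dotProduct, bell, phi2, Fintype.sum_prod_type, Fin.sum_univ_two, Prod.ext_iff]

lemma bell_phi3 : star bell ⬝ᵥ phi3 = 0 := by
  simp [dotProduct, bell, phi3, Fintype.sum_prod_type, Fin.sum_univ_two, Prod.ext_iff]

theorem stmt_5 (Ω : Matrix (Fin 2 × Fin 2) (Fin 2 × Fin 2) ℂ)
    (hΩ : Ω.IsHermitian) (hfix : Ω *ᵥ bell = bell) (htr : 2 ≤ Ω.trace.re) :
    ∃ φ : Fin 2 × Fin 2 → ℂ, star φ ⬝ᵥ φ = 1 ∧ star bell ⬝ᵥ φ = 0 ∧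
      (1/3 : ℝ) ≤ (star φ ⬝ᵥ (Ω *ᵥ φ)).re := by
  have hkey := key Ω
  rw [hfix, bell_norm] at hkey
  have hre := congrArg Complex.re hkey
  simp only [Complex.add_re, Complex.one_re] at hre
  by_contra h
  push_neg at h
  have h1 := h phi1 phi1_norm bell_phi1
  have h2 := h phi2 phi2_norm bell_phi2
  have h3 := h phi3 phi3_norm bell_phi3
  linarith
end

section
/- Let d ≥ 2, let ψ be a unit vector in ℂ^d, and let t ∈ [1, d]. For every Hermitian positive semidefinite operator Ω on ℂ^d with Ωψ = ψ and tr(Ω) = t, the supremum q(Ω) of ⟨φ, Ωφ⟩ over unit vectors φ orthogonal to ψ satisfies q(Ω) ≥ (t−1)/(d−1); and the operator Ω* = |ψ⟩⟨ψ| + ((t−1)/(d−1))·(I − |ψ⟩⟨ψ|) satisfies Ω*ψ = ψ, tr(Ω*) = t, and q(Ω*) = (t−1)/(d−1). In particular, with d = 2^N and t = 2^{N−1} (the trace of any convex combination of positive-eigenspace projectors of N-qubit stabilizers), the optimal value is (2^{N−1} − 1)/(2^N − 1). -/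
/-!
Extend `ψ` to an orthonormal basis `ψ = e₁, e₂, …, e_d`. The trace of `Ω` is the sum of the
diagonal entries `⟨eᵢ, Ω eᵢ⟩`, all nonnegative; the first is `1` because `Ωψ = ψ`, so the other
`d − 1` entries sum to `t − 1` and one of them is at least `(t − 1)/(d − 1)`. The same expansion
bounds every `⟨φ, Ωφ⟩` by the trace, so the supremum defining `q` is finite. The benchmark
`Ω*` acts on `ψ^⊥` as the scalar `(t − 1)/(d − 1)`, so its quadratic form is constant there.
-/

open Matrix ComplexOrder

/-- The performance parameter `q(Ω, ψ)`: the supremum of `⟨φ, Ωφ⟩` over unit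
vectors `φ` orthogonal to `ψ`. -/
noncomputable def qparam {n : Type*} [Fintype n] [DecidableEq n]
    (Ω : Matrix n n ℂ) (ψ : n → ℂ) : ℝ :=
  sSup {x : ℝ | ∃ φ : n → ℂ, star φ ⬝ᵥ φ = 1 ∧ star ψ ⬝ᵥ φ = 0 ∧
    x = (star φ ⬝ᵥ (Ω *ᵥ φ)).re}

/-- The benchmark strategy `Ω* = |ψ⟩⟨ψ| + ((t−1)/(d−1))·(I − |ψ⟩⟨ψ|)`. -/
noncomputable def Ωstar (d : ℕ) (ψ : Fin d → ℂ) (t : ℝ) : Matrix (Fin d) (Fin d) ℂ :=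
  vecMulVec ψ (star ψ)
    + (((t - 1) / (d - 1) : ℝ) : ℂ) •
        ((1 : Matrix (Fin d) (Fin d) ℂ) - vecMulVec ψ (star ψ))

open Finset

section Orthonormal

variable {n : Type*} [Fintype n] [DecidableEq n]

lemma exists_orthonormal_family_extending {ψ : n → ℂ} (hψ : star ψ ⬝ᵥ ψ = 1) (i₀ : n) :
    ∃ c : n → n → ℂ, (∀ i j, star (c i) ⬝ᵥ c j = if i = j then 1 else 0) ∧ c i₀ = ψ := by
  have horth : Orthonormal ℂ (({i₀} : Set n).domRestrict fun _ => WithLp.toLp 2 ψ) := by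
    rw [orthonormal_iff_ite]
    rintro ⟨i, rfl⟩ ⟨j, rfl⟩
    rw [if_pos rfl, EuclideanSpace.inner_eq_star_dotProduct, dotProduct_comm]
    exact hψ
  obtain ⟨b, hb⟩ := horth.exists_orthonormalBasis_extension_of_card_eq (by simp)
  refine ⟨fun i => (b i).ofLp, fun i j => ?_, by simp [hb i₀ rfl]⟩
  simpa [EuclideanSpace.inner_eq_star_dotProduct, dotProduct_comm] using
    orthonormal_iff_ite.mp b.orthonormal i j

lemma trace_eq_sum_dotProduct_mulVec (Ω : Matrix n n ℂ) {c : n → n → ℂ}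
    (hc : ∀ i j, star (c i) ⬝ᵥ c j = if i = j then 1 else 0) :
    Ω.trace = ∑ i, star (c i) ⬝ᵥ (Ω *ᵥ c i) := by
  set B : Matrix n n ℂ := Matrix.of fun k i => c i k
  have hB : Bᴴ * B = 1 := by
    ext i j
    simpa [B, mul_apply, dotProduct, one_apply] using hc i j
  calc Ω.trace = (Ω * (B * Bᴴ)).trace := by rw [mul_eq_one_comm.mp hB, mul_one]
    _ = (Bᴴ * (Ω * B)).trace := by rw [← Matrix.mul_assoc, trace_mul_comm]
    _ = ∑ i, star (c i) ⬝ᵥ (Ω *ᵥ c i) := by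
        simp only [trace, Matrix.diag, mul_apply, conjTranspose_apply, dotProduct, mulVec, B,
          of_apply, mul_sum, Pi.star_apply]

lemma exists_unit_orthogonal (hn : 1 < Fintype.card n) {ψ : n → ℂ}
    (hψ : star ψ ⬝ᵥ ψ = 1) : ∃ φ : n → ℂ, star φ ⬝ᵥ φ = 1 ∧ star ψ ⬝ᵥ φ = 0 := by
  obtain ⟨i₀, j, hij⟩ := Fintype.one_lt_card_iff_nontrivial.mp hn
  obtain ⟨c, hc, rfl⟩ := exists_orthonormal_family_extending hψ i₀
  exact ⟨c j, by simpa using hc j j, by simpa [hij] using hc i₀ j⟩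

lemma Matrix.PosSemidef.re_dotProduct_mulVec_le_trace {Ω : Matrix n n ℂ}
    (hΩ : Ω.PosSemidef) {φ : n → ℂ} (hφ : star φ ⬝ᵥ φ = 1) :
    (star φ ⬝ᵥ (Ω *ᵥ φ)).re ≤ Ω.trace.re := by
  have : Nonempty n := by
    by_contra h
    simp [not_nonempty_iff.mp h, dotProduct] at hφ
  obtain ⟨i₀⟩ := this
  obtain ⟨c, hc, rfl⟩ := exists_orthonormal_family_extending hφ i₀
  rw [trace_eq_sum_dotProduct_mulVec Ω hc, Complex.re_sum]
  exact single_le_sum (f := fun i => (star (c i) ⬝ᵥ (Ω *ᵥ c i)).re)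
    (fun i _ => hΩ.re_dotProduct_nonneg (c i)) (mem_univ i₀)

lemma le_qparam {Ω : Matrix n n ℂ} (hΩ : Ω.PosSemidef) {ψ φ : n → ℂ}
    (hφ : star φ ⬝ᵥ φ = 1) (hψφ : star ψ ⬝ᵥ φ = 0) :
    (star φ ⬝ᵥ (Ω *ᵥ φ)).re ≤ qparam Ω ψ := by
  refine le_csSup ⟨Ω.trace.re, ?_⟩ ⟨φ, hφ, hψφ, rfl⟩
  rintro _ ⟨φ', hφ', -, rfl⟩
  exact hΩ.re_dotProduct_mulVec_le_trace hφ'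

lemma qparam_eq_of_mulVec_eq_smul (hn : 1 < Fintype.card n) {Ω : Matrix n n ℂ}
    {ψ : n → ℂ} (hψ : star ψ ⬝ᵥ ψ = 1) {a : ℝ}
    (hΩ : ∀ φ, star ψ ⬝ᵥ φ = 0 → Ω *ᵥ φ = (a : ℂ) • φ) :
    qparam Ω ψ = a := by
  obtain ⟨φ₀, hφ₀, hψφ₀⟩ := exists_unit_orthogonal hn hψ
  refine (congrArg sSup ?_).trans (csSup_singleton a)
  ext x
  constructor
  · rintro ⟨φ, hφ, hψφ, rfl⟩
    simp [hΩ φ hψφ, dotProduct_smul, hφ]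
  · rintro rfl
    exact ⟨φ₀, hφ₀, hψφ₀, by simp [hΩ φ₀ hψφ₀, dotProduct_smul, hφ₀]⟩

lemma div_le_qparam (hn : 1 < Fintype.card n) {Ω : Matrix n n ℂ} (hΩ : Ω.PosSemidef)
    {ψ : n → ℂ} (hψ : star ψ ⬝ᵥ ψ = 1) (hΩψ : Ω *ᵥ ψ = ψ) :
    (Ω.trace.re - 1) / (Fintype.card n - 1) ≤ qparam Ω ψ := by
  obtain ⟨i₀⟩ : Nonempty n := Fintype.card_pos_iff.mp (by omega)
  obtain ⟨c, hc, rfl⟩ := exists_orthonormal_family_extending hψ i₀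
  set f : n → ℝ := fun i => (star (c i) ⬝ᵥ (Ω *ᵥ c i)).re
  have hsum : ∑ i ∈ univ.erase i₀, f i = Ω.trace.re - 1 := by
    have hf₀ : f i₀ = 1 := by simp [f, hΩψ, hψ]
    have htrace : Ω.trace.re = ∑ i, f i := by
      rw [trace_eq_sum_dotProduct_mulVec Ω hc, Complex.re_sum]
    rw [htrace, ← add_sum_erase _ _ (mem_univ i₀), hf₀, add_sub_cancel_left]
  have hcard : ((univ.erase i₀).card : ℝ) = Fintype.card n - 1 := by
    rw [card_erase_of_mem (mem_univ i₀), card_univ, Nat.cast_pred (by omega)]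
  obtain ⟨j, hj, hfj⟩ := exists_le_of_sum_le (s := univ.erase i₀)
    (f := fun _ => (Ω.trace.re - 1) / (Fintype.card n - 1)) (g := f)
    (univ.erase i₀ |>.card_pos.mp (by rw [card_erase_of_mem (mem_univ i₀), card_univ]; omega))
    (by
      rw [sum_const, nsmul_eq_mul, hcard, hsum, mul_div_cancel₀]
      have : (1 : ℝ) < Fintype.card n := by exact_mod_cast hn
      linarith)
  have hij : i₀ ≠ j := (ne_of_mem_erase hj).symm
  exact hfj.trans (le_qparam hΩ (by simpa using hc j j) (by simpa [hij] using hc i₀ j))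

end Orthonormal

section Ωstar

variable {d : ℕ} {ψ : Fin d → ℂ}

lemma Ωstar_mulVec_self (hψ : star ψ ⬝ᵥ ψ = 1) (t : ℝ) : Ωstar d ψ t *ᵥ ψ = ψ := by
  simp [Ωstar, add_mulVec, smul_mulVec, sub_mulVec, vecMulVec_mulVec, hψ]

lemma Ωstar_mulVec_of_orthogonal (t : ℝ) {φ : Fin d → ℂ} (hψφ : star ψ ⬝ᵥ φ = 0) :
    Ωstar d ψ t *ᵥ φ = (((t - 1) / (d - 1) : ℝ) : ℂ) • φ := by
  simp [Ωstar, add_mulVec, smul_mulVec, sub_mulVec, vecMulVec_mulVec, hψφ]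

lemma trace_Ωstar (hd : d ≠ 1) (hψ : star ψ ⬝ᵥ ψ = 1) (t : ℝ) :
    (Ωstar d ψ t).trace = t := by
  have hd' : ((d : ℂ) - 1) ≠ 0 := by
    rw [sub_ne_zero]
    exact_mod_cast hd
  rw [Ωstar, trace_add, trace_smul, trace_sub, trace_one, trace_vecMulVec, dotProduct_comm, hψ,
    Fintype.card_fin, smul_eq_mul]
  push_cast
  field_simp
  ring

lemma qparam_Ωstar (hd : 1 < d) (hψ : star ψ ⬝ᵥ ψ = 1) (t : ℝ) :
    qparam (Ωstar d ψ t) ψ = (t - 1) / (d - 1) :=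
  qparam_eq_of_mulVec_eq_smul (by rwa [Fintype.card_fin]) hψ fun _ => Ωstar_mulVec_of_orthogonal t

end Ωstar

theorem stmt_16_general (d : ℕ) (hd : 2 ≤ d) (ψ : Fin d → ℂ) (hψ : star ψ ⬝ᵥ ψ = 1)
    (t : ℝ) :
    (∀ Ω : Matrix (Fin d) (Fin d) ℂ, Ω.PosSemidef → Ω *ᵥ ψ = ψ → Ω.trace = (t : ℂ) →
      (t - 1) / (d - 1) ≤ qparam Ω ψ) ∧
    Ωstar d ψ t *ᵥ ψ = ψ ∧
    (Ωstar d ψ t).trace = (t : ℂ) ∧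
    qparam (Ωstar d ψ t) ψ = (t - 1) / (d - 1) ∧
    ∀ N : ℕ, 1 ≤ N → d = 2 ^ N → t = 2 ^ (N - 1) →
      qparam (Ωstar d ψ t) ψ = ((2 : ℝ) ^ (N - 1) - 1) / ((2 : ℝ) ^ N - 1) := by
  refine ⟨fun Ω hΩ hΩψ htr => ?_, Ωstar_mulVec_self hψ t, trace_Ωstar (by omega) hψ t,
    qparam_Ωstar hd hψ t, fun N _ hdN htN => ?_⟩
  · simpa [htr] using div_le_qparam (by rwa [Fintype.card_fin]) hΩ hψ hΩψ
  · rw [qparam_Ωstar hd hψ t, htN, hdN, Nat.cast_pow, Nat.cast_ofNat]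

theorem stmt_16 (d : ℕ) (hd : 2 ≤ d) (ψ : Fin d → ℂ) (hψ : star ψ ⬝ᵥ ψ = 1)
    (t : ℝ) (ht : t ∈ Set.Icc (1 : ℝ) (d : ℝ)) :
    (∀ Ω : Matrix (Fin d) (Fin d) ℂ, Ω.PosSemidef → Ω *ᵥ ψ = ψ → Ω.trace = (t : ℂ) →
      (t - 1) / (d - 1) ≤ qparam Ω ψ) ∧
    Ωstar d ψ t *ᵥ ψ = ψ ∧
    (Ωstar d ψ t).trace = (t : ℂ) ∧
    qparam (Ωstar d ψ t) ψ = (t - 1) / (d - 1) ∧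
    ∀ N : ℕ, 1 ≤ N → d = 2 ^ N → t = 2 ^ (N - 1) →
      qparam (Ωstar d ψ t) ψ = ((2 : ℝ) ^ (N - 1) - 1) / ((2 : ℝ) ^ N - 1) :=
  stmt_16_general d hd ψ hψ t
end
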